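/- arXiv:2109.08803 — 3 statements merged into one kernel-verified Lean document; each statement's English description precedes it below -/
import Mathlib

section
/- Let A be a unital algebra over ℂ, φ a faithful linear functional on A, S a bijective anti-multiplicative linear map on A, and δ ∈ A such that φ(S(a)) = φ(aδ) and φ(S⁻¹(a)) = φ(δ* a) for all a ∈ A. Then δ* S(δ) = 1; in particular, if δ* is invertible then S(δ) = (δ*)⁻¹. -/
/-- If φ is a faithful linear functional, S is a bijective
anti-multiplicative linear map, and δ satisfies φ(S(a)) = φ(aδ) and
φ(S⁻¹(a)) = φ(δ*a) for all a, then δ* S(δ) = 1; in particular if δ* is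
invertible then S(δ) = (δ*)⁻¹. -/
theorem stmt3 (A : Type*) [Ring A] [Algebra ℂ A] [StarRing A] [StarModule ℂ A]
    (φ : A →ₗ[ℂ] ℂ)
    (hfaith : ∀ a : A, (∀ x : A, φ (x * a) = 0) → a = 0)
    (S : A ≃ₗ[ℂ] A) (hS : ∀ x y : A, S (x * y) = S y * S x)
    (δ : A) (hδ : ∀ a : A, φ (S a) = φ (a * δ))
    (hδ' : ∀ a : A, φ (S.symm a) = φ (star δ * a)) :
    star δ * S δ = 1 ∧ ∀ u : Aˣ, (u : A) = star δ → S δ = ↑u⁻¹ := by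
  -- Key identity: φ(δ* S(δ) x) = φ(x) for all x.
  have key : ∀ x : A, φ (star δ * S δ * x) = φ x := by
    intro x
    have h1 : S δ * x = S (S.symm x * δ) := by
      rw [hS, S.apply_symm_apply]
    calc φ (star δ * S δ * x) = φ (star δ * S (S.symm x * δ)) := by
          rw [mul_assoc, h1]
      _ = φ (S.symm (S (S.symm x * δ))) := (hδ' _).symm
      _ = φ (S.symm x * δ) := by rw [S.symm_apply_apply]
      _ = φ (S (S.symm x)) := (hδ _).symm
      _ = φ x := by rw [S.apply_symm_apply]
  -- Set b := δ* S(δ) - 1; then φ(b x) = 0 for all x.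
  set b : A := star δ * S δ - 1 with hbdef
  have hb0 : ∀ x : A, φ (b * x) = 0 := by
    intro x
    have : b * x = star δ * S δ * x - x := by rw [hbdef, sub_mul, one_mul]
    rw [this, map_sub, key x, sub_self]
  -- Left faithfulness via S: φ(y * S b) = 0 for all y, hence S b = 0, hence b = 0.
  have hSb : S b = 0 := by
    apply hfaith
    intro y
    have h2 : y * S b = S (b * S.symm y) := by
      rw [hS, S.apply_symm_apply]
    rw [h2, hδ, mul_assoc, hb0]
  have hb : b = 0 := by
    have := congrArg S.symm hSb
    simpa using this
  have h1 : star δ * S δ = 1 := by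
    have := sub_eq_zero.mp hb
    simpa using this
  refine ⟨h1, ?_⟩
  intro u hu
  have hu1 : (↑u : A) * S δ = 1 := by rw [hu]; exact h1
  calc S δ = ↑u⁻¹ * (↑u * S δ) := by rw [← mul_assoc, Units.inv_mul, one_mul]
    _ = ↑u⁻¹ := by rw [hu1, mul_one]
end

section
/- Let B and C be *-algebras over ℂ, ν a linear functional on B, μ a linear functional on C, and S_B : B → C, S_C : C → B anti-homomorphisms such that S_C(S_B(b)*)* = b for all b ∈ B, μ ∘ (S_B ∘ S_C) = μ and μ has KMS automorphism σ_C = S_B ∘ S_C in the sense that μ(cc') = μ(c'σ_C(c)) for all c, c' ∈ C, and μ ∘ S_B = ν. Then for all b₁, b₂ ∈ B: μ(S_B(b₁)* S_B(b₂)) = ν(b₁* b₂). -/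
/-- Let B, C be *-algebras, S_B : B → C, S_C : C → B
anti-homomorphisms with S_C(S_B(b)*)* = b, μ a linear functional on C with
KMS automorphism S_B ∘ S_C, and ν := μ ∘ S_B. Then
μ(S_B(b₁)* S_B(b₂)) = ν(b₁* b₂) for all b₁, b₂ ∈ B. -/
theorem stmt13 (B C : Type*)
    [Ring B] [Algebra ℂ B] [StarRing B] [StarModule ℂ B]
    [Ring C] [Algebra ℂ C] [StarRing C] [StarModule ℂ C]
    (μ : C →ₗ[ℂ] ℂ) (ν : B →ₗ[ℂ] ℂ)
    (SB : B →ₗ[ℂ] C) (SC : C →ₗ[ℂ] B)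
    (hSB : ∀ x y : B, SB (x * y) = SB y * SB x)
    (hSC : ∀ x y : C, SC (x * y) = SC y * SC x)
    (hinv : ∀ b : B, star (SC (star (SB b))) = b)
    (hKMS : ∀ c c' : C, μ (c * c') = μ (c' * SB (SC c)))
    (hν : ∀ b : B, μ (SB b) = ν b) :
    ∀ b₁ b₂ : B, μ (star (SB b₁) * SB b₂) = ν (star b₁ * b₂) := by
  intro b₁ b₂
  have h1 : SC (star (SB b₁)) = star b₁ := by
    have h := congrArg star (hinv b₁)
    rwa [star_star] at h
  rw [hKMS, h1, ← hSB, hν]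
end

section
/- Let A be an algebra over ℂ, Δ : A → A ⊗ A an injective multiplicative linear map, and let σ, σ', S² be algebra automorphisms of A (bijective multiplicative linear maps) satisfying (i) Δ ∘ σ = (S² ⊗ σ) ∘ Δ, (ii) Δ ∘ σ' = (σ' ⊗ S⁻²) ∘ Δ, (iii) σ ∘ S² = S² ∘ σ, and (iv) σ' ∘ S² = S² ∘ σ'. Then σ and σ' commute: σ ∘ σ' = σ' ∘ σ. -/
open scoped TensorProduct

/-- Let Δ : A → A ⊗ A be an injective multiplicative linear map and
σ, σ', S² automorphisms with Δ∘σ = (S²⊗σ)∘Δ, Δ∘σ' = (σ'⊗S⁻²)∘Δ, σ∘S² = S²∘σ and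
σ'∘S² = S²∘σ'. Then σ∘σ' = σ'∘σ. -/
theorem stmt15 (A : Type*) [Ring A] [Algebra ℂ A]
    (Δ : A →ₗ[ℂ] A ⊗[ℂ] A)
    (hΔmul : ∀ a b : A, Δ (a * b) = Δ a * Δ b)
    (hΔinj : Function.Injective Δ)
    (σ σ' S2 : A ≃ₐ[ℂ] A)
    (h1 : ∀ a : A, Δ (σ a) = TensorProduct.map S2.toLinearMap σ.toLinearMap (Δ a))
    (h2 : ∀ a : A,
      Δ (σ' a) = TensorProduct.map σ'.toLinearMap S2.symm.toLinearMap (Δ a))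
    (h3 : ∀ a : A, σ (S2 a) = S2 (σ a))
    (h4 : ∀ a : A, σ' (S2 a) = S2 (σ' a)) :
    ∀ a : A, σ (σ' a) = σ' (σ a) := by
  intro a
  apply hΔinj
  have h3' : ∀ a : A, σ (S2.symm a) = S2.symm (σ a) := by
    intro a
    apply S2.injective
    rw [← h3, S2.apply_symm_apply, S2.apply_symm_apply]
  have key : (S2.toLinearMap ∘ₗ σ'.toLinearMap : A →ₗ[ℂ] A) = σ'.toLinearMap ∘ₗ S2.toLinearMap := by
    ext x; exact (h4 x).symm
  have key2 : (σ.toLinearMap ∘ₗ S2.symm.toLinearMap : A →ₗ[ℂ] A) = S2.symm.toLinearMap ∘ₗ σ.toLinearMap := by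
    ext x; exact h3' x
  rw [h1, h2, h2, h1, ← LinearMap.comp_apply (TensorProduct.map _ _), ← LinearMap.comp_apply (TensorProduct.map σ'.toLinearMap _),
    ← TensorProduct.map_comp, ← TensorProduct.map_comp, key, key2,
    TensorProduct.map_comp]
end
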